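/- arXiv:math/0411470 — 2 statements merged into one kernel-verified Lean document; each statement's English description precedes it below -/
import Mathlib

section
/- In a Garside monoid M there exists a unique Garside element Δ such that Δ ≤_L Δ' and Δ ≤_R Δ' for every Garside element Δ' of M (the minimal Garside element of M). -/
/-- `a` left-divides `b` in the monoid `M`. -/
def dvdL {M : Type*} [Monoid M] (a b : M) : Prop := ∃ c, a * c = b

/-- `a` right-divides `b` in the monoid `M`. -/
def dvdR {M : Type*} [Monoid M] (a b : M) : Prop := ∃ c, c * a = b

/-- `L(a)`, the set of left divisors of `a`. -/
def Lset {M : Type*} [Monoid M] (a : M) : Set M := {x | dvdL x a}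

/-- `R(a)`, the set of right divisors of `a`. -/
def Rset {M : Type*} [Monoid M] (a : M) : Set M := {x | dvdR x a}

/-- `a` is an atom: `a ≠ 1` and `a = b * c` implies `b = 1` or `c = 1`. -/
def IsAtomElt {M : Type*} [Monoid M] (a : M) : Prop :=
  a ≠ 1 ∧ ∀ b c : M, a = b * c → b = 1 ∨ c = 1

/-- `M` is atomic: every element is a finite product of atoms, and the lengths of
expressions of a given element as products of atoms are bounded above. -/
def Atomic (M : Type*) [Monoid M] : Prop :=
  (∀ a : M, ∃ l : List M, (∀ x ∈ l, IsAtomElt x) ∧ l.prod = a) ∧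
  (∀ a : M, ∃ N : ℕ, ∀ l : List M, (∀ x ∈ l, IsAtomElt x) → l.prod = a → l.length ≤ N)

/-- `Δ` is a Garside element: `L(Δ) = R(Δ)` and `L(Δ)` generates `M`. -/
def IsGarsideElt {M : Type*} [Monoid M] (Δ : M) : Prop :=
  Lset Δ = Rset Δ ∧ Submonoid.closure (Lset Δ) = ⊤

/-- `d` is a greatest common lower bound of `a` and `b` with respect to `≤_L`. -/
def IsGlbL {M : Type*} [Monoid M] (a b d : M) : Prop :=
  dvdL d a ∧ dvdL d b ∧ ∀ c : M, dvdL c a → dvdL c b → dvdL c d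

/-- `d` is a least common upper bound of `a` and `b` with respect to `≤_L`. -/
def IsLubL {M : Type*} [Monoid M] (a b d : M) : Prop :=
  dvdL a d ∧ dvdL b d ∧ ∀ c : M, dvdL a c → dvdL b c → dvdL d c

/-- `d` is a greatest common lower bound of `a` and `b` with respect to `≤_R`. -/
def IsGlbR {M : Type*} [Monoid M] (a b d : M) : Prop :=
  dvdR d a ∧ dvdR d b ∧ ∀ c : M, dvdR c a → dvdR c b → dvdR c d

/-- `d` is a least common upper bound of `a` and `b` with respect to `≤_R`. -/
def IsLubR {M : Type*} [Monoid M] (a b d : M) : Prop :=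
  dvdR a d ∧ dvdR b d ∧ ∀ c : M, dvdR a c → dvdR b c → dvdR d c

/-- `M` is a Garside monoid: finitely generated, left and right cancellative, atomic,
`≤_L`- and `≤_R`-lattice conditions, and it possesses a Garside element. -/
def IsGarsideMonoid (M : Type*) [Monoid M] : Prop :=
  (∃ S : Set M, S.Finite ∧ Submonoid.closure S = ⊤) ∧
  (∀ a b c : M, a * b = a * c → b = c) ∧
  (∀ a b c : M, b * a = c * a → b = c) ∧
  Atomic M ∧
  (∀ a b : M, ∃ d, IsGlbL a b d) ∧
  (∀ a b : M, ∃ d, IsLubL a b d) ∧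
  (∀ a b : M, ∃ d, IsGlbR a b d) ∧
  (∀ a b : M, ∃ d, IsLubR a b d) ∧
  (∃ Δ : M, IsGarsideElt Δ)

/-!
Let `ν(a)` be the largest number of atoms in a factorisation of `a`; it is superadditive, so it
strictly increases along proper divisibility, and `u * a * d = a` forces `u = d = 1`.
Because `L(Δ) = R(Δ)` for Garside elements, the left gcd `g` of two of them right-divides
their right gcd `g'`, which in turn left-divides `g`; hence `g = g'`, so the left and right
divisors of `g` agree. Every atom divides every Garside element, so it divides `g` and `L(g)`
generates `M`: Garside elements are closed under left gcds. A Garside element of least `ν`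
therefore left-divides (equivalently right-divides) every Garside element, and it is unique
by antisymmetry of `≤_L`.
-/

section

variable {M : Type*} [Monoid M]

lemma dvdL_trans {a b c : M} : dvdL a b → dvdL b c → dvdL a c
  | ⟨u, hu⟩, ⟨v, hv⟩ => ⟨u * v, by rw [← mul_assoc, hu, hv]⟩

lemma dvdR_trans {a b c : M} : dvdR a b → dvdR b c → dvdR a c
  | ⟨u, hu⟩, ⟨v, hv⟩ => ⟨v * u, by rw [mul_assoc, hu, hv]⟩

lemma IsGlbL.dvdL_iff {a b g x : M} (hg : IsGlbL a b g) : dvdL x g ↔ dvdL x a ∧ dvdL x b :=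
  ⟨fun h => ⟨dvdL_trans h hg.1, dvdL_trans h hg.2.1⟩, fun h => hg.2.2 x h.1 h.2⟩

lemma IsGlbR.dvdR_iff {a b g x : M} (hg : IsGlbR a b g) : dvdR x g ↔ dvdR x a ∧ dvdR x b :=
  ⟨fun h => ⟨dvdR_trans h hg.1, dvdR_trans h hg.2.1⟩, fun h => hg.2.2 x h.1 h.2⟩

lemma IsGarsideElt.dvdL_iff_dvdR {Δ x : M} (h : IsGarsideElt Δ) : dvdL x Δ ↔ dvdR x Δ :=
  Set.ext_iff.mp h.1 x

lemma IsAtomElt.mem_of_mem_closure {S : Set M} {a : M} (ha : IsAtomElt a)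
    (hS : a ∈ Submonoid.closure S) : a ∈ S := by
  induction hS using Submonoid.closure_induction with
  | mem x hx => exact hx
  | one => exact absurd rfl ha.1
  | mul x y _ _ ihx ihy =>
    rcases ha.2 x y rfl with rfl | rfl
    · rw [one_mul] at ha ⊢; exact ihy ha
    · rw [mul_one] at ha ⊢; exact ihx ha

lemma IsGarsideElt.dvdL_of_isAtomElt {Δ a : M} (hΔ : IsGarsideElt Δ) (ha : IsAtomElt a) :
    dvdL a Δ :=
  ha.mem_of_mem_closure (hΔ.2 ▸ Submonoid.mem_top a)

def atomLengths (a : M) : Set ℕ :=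
  List.length '' {l : List M | (∀ x ∈ l, IsAtomElt x) ∧ l.prod = a}

/-- `0` unless `a` has a bounded nonempty set of atom lengths, as it does in an atomic monoid. -/
noncomputable def maxAtomLength (a : M) : ℕ := sSup (atomLengths a)

namespace Atomic

variable (hAt : Atomic M)
include hAt

lemma closure_atoms_eq_top : Submonoid.closure {x : M | IsAtomElt x} = ⊤ := by
  refine eq_top_iff.mpr fun a _ => ?_
  obtain ⟨l, hl, rfl⟩ := hAt.1 a
  exact Submonoid.list_prod_mem _ fun x hx => Submonoid.subset_closure (hl x hx)

lemma bddAbove_atomLengths (a : M) : BddAbove (atomLengths a) := by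
  obtain ⟨N, hN⟩ := hAt.2 a
  refine ⟨N, ?_⟩
  rintro _ ⟨l, ⟨hl, hp⟩, rfl⟩
  exact hN l hl hp

lemma length_le_maxAtomLength {l : List M} (hl : ∀ x ∈ l, IsAtomElt x) :
    l.length ≤ maxAtomLength l.prod :=
  le_csSup (hAt.bddAbove_atomLengths _) ⟨l, ⟨hl, rfl⟩, rfl⟩

lemma exists_length_eq_maxAtomLength (a : M) :
    ∃ l : List M, (∀ x ∈ l, IsAtomElt x) ∧ l.prod = a ∧ l.length = maxAtomLength a := by
  obtain ⟨l, hl, hp⟩ := hAt.1 a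
  obtain ⟨l', ⟨hl', hp'⟩, hlen⟩ :=
    Nat.sSup_mem (s := atomLengths a) ⟨_, l, ⟨hl, hp⟩, rfl⟩ (hAt.bddAbove_atomLengths a)
  exact ⟨l', hl', hp', hlen⟩

lemma maxAtomLength_add_le_mul (a b : M) :
    maxAtomLength a + maxAtomLength b ≤ maxAtomLength (a * b) := by
  obtain ⟨la, hla, rfl, ha⟩ := hAt.exists_length_eq_maxAtomLength a
  obtain ⟨lb, hlb, rfl, hb⟩ := hAt.exists_length_eq_maxAtomLength b
  have := hAt.length_le_maxAtomLength (l := la ++ lb) fun x hx =>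
    (List.mem_append.mp hx).elim (hla x) (hlb x)
  rwa [List.length_append, List.prod_append, ha, hb] at this

lemma maxAtomLength_pos {a : M} (ha : a ≠ 1) : 0 < maxAtomLength a := by
  obtain ⟨l, hl, rfl⟩ := hAt.1 a
  refine lt_of_lt_of_le (List.length_pos_iff.mpr ?_) (hAt.length_le_maxAtomLength hl)
  rintro rfl
  exact ha List.prod_nil

lemma maxAtomLength_lt_mul {a c : M} (hc : c ≠ 1) : maxAtomLength a < maxAtomLength (a * c) :=
  lt_of_lt_of_le (Nat.lt_add_of_pos_right (hAt.maxAtomLength_pos hc))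
    (hAt.maxAtomLength_add_le_mul a c)

lemma eq_one_of_mul_mul_eq_self {u a d : M} (h : u * a * d = a) : u = 1 ∧ d = 1 := by
  have hu := hAt.maxAtomLength_add_le_mul u a
  have hd := hAt.maxAtomLength_add_le_mul (u * a) d
  rw [h] at hd
  constructor <;> by_contra hne <;> have := hAt.maxAtomLength_pos hne <;> omega

lemma dvdL_antisymm (hlc : ∀ a b c : M, a * b = a * c → b = c) {a b : M}
    (hab : dvdL a b) (hba : dvdL b a) : a = b := by
  obtain ⟨c, rfl⟩ := hab
  obtain ⟨d, hd⟩ := hba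
  have hcd : c * 1 * d = 1 := by rw [mul_one]; exact hlc a _ _ (by rw [← mul_assoc, hd, mul_one])
  rw [(hAt.eq_one_of_mul_mul_eq_self hcd).1, mul_one]

lemma isGlbR_of_isGlbL (hglbR : ∀ a b : M, ∃ d, IsGlbR a b d) {Δ₁ Δ₂ g : M}
    (h₁ : IsGarsideElt Δ₁) (h₂ : IsGarsideElt Δ₂) (hg : IsGlbL Δ₁ Δ₂ g) : IsGlbR Δ₁ Δ₂ g := by
  obtain ⟨g', hg'⟩ := hglbR Δ₁ Δ₂
  obtain ⟨u, hu⟩ : dvdR g g' :=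
    hg'.dvdR_iff.mpr ⟨h₁.dvdL_iff_dvdR.mp hg.1, h₂.dvdL_iff_dvdR.mp hg.2.1⟩
  obtain ⟨d, hd⟩ : dvdL g' g :=
    hg.dvdL_iff.mpr ⟨h₁.dvdL_iff_dvdR.mpr hg'.1, h₂.dvdL_iff_dvdR.mpr hg'.2.1⟩
  have hu1 : u = 1 := (hAt.eq_one_of_mul_mul_eq_self (show u * g * d = g by rw [hu, hd])).1
  rwa [← hu, hu1, one_mul] at hg'

lemma isGarsideElt_of_isGlbL (hglbR : ∀ a b : M, ∃ d, IsGlbR a b d) {Δ₁ Δ₂ g : M}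
    (h₁ : IsGarsideElt Δ₁) (h₂ : IsGarsideElt Δ₂) (hg : IsGlbL Δ₁ Δ₂ g) : IsGarsideElt g := by
  have hgR := hAt.isGlbR_of_isGlbL hglbR h₁ h₂ hg
  refine ⟨Set.ext fun x => ?_, ?_⟩
  · change dvdL x g ↔ dvdR x g
    rw [hg.dvdL_iff, hgR.dvdR_iff, h₁.dvdL_iff_dvdR, h₂.dvdL_iff_dvdR]
  · rw [eq_top_iff, ← hAt.closure_atoms_eq_top]
    exact Submonoid.closure_mono fun a ha =>
      hg.2.2 a (h₁.dvdL_of_isAtomElt ha) (h₂.dvdL_of_isAtomElt ha)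

lemma exists_isGarsideElt_forall_dvdL (hglbL : ∀ a b : M, ∃ d, IsGlbL a b d)
    (hglbR : ∀ a b : M, ∃ d, IsGlbR a b d) (hne : ∃ Δ : M, IsGarsideElt Δ) :
    ∃ Δ : M, IsGarsideElt Δ ∧ ∀ Δ' : M, IsGarsideElt Δ' → dvdL Δ Δ' := by
  obtain ⟨Δ, hΔ, hmin⟩ := exists_minimalFor_of_wellFoundedLT _ maxAtomLength hne
  refine ⟨Δ, hΔ, fun Δ' hΔ' => ?_⟩
  obtain ⟨g, hg⟩ := hglbL Δ Δ'
  obtain ⟨c, hc⟩ := hg.1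
  have hgG := hAt.isGarsideElt_of_isGlbL hglbR hΔ hΔ' hg
  obtain rfl : c = 1 := by
    by_contra hc1
    have hlt := hAt.maxAtomLength_lt_mul (a := g) hc1
    rw [hc] at hlt
    exact absurd (hmin hgG hlt.le) (not_le.mpr hlt)
  rw [mul_one] at hc
  exact hc ▸ hg.2.1

end Atomic

end

/-- **Lemma 3.3 (minimal Garside element).** In a Garside monoid `M` there exists a
unique Garside element `Δ` which is minimal with respect to both `≤_L` and `≤_R`
among all Garside elements of `M`. -/
theorem exists_unique_minimal_garside_elt {M : Type*} [Monoid M]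
    (hM : IsGarsideMonoid M) :
    ∃! Δ : M, IsGarsideElt Δ ∧
      ∀ Δ' : M, IsGarsideElt Δ' → dvdL Δ Δ' ∧ dvdR Δ Δ' := by
  obtain ⟨-, hlc, -, hAt, hglbL, -, hglbR, -, hne⟩ := hM
  obtain ⟨Δ, hΔ, hmin⟩ := hAt.exists_isGarsideElt_forall_dvdL hglbL hglbR hne
  refine ⟨Δ, ⟨hΔ, fun Δ' hΔ' => ⟨hmin Δ' hΔ', hΔ'.dvdL_iff_dvdR.mp (hmin Δ' hΔ')⟩⟩, ?_⟩
  rintro Δ' ⟨hΔ', hmin'⟩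
  exact hAt.dvdL_antisymm hlc (hmin' Δ hΔ).1 (hmin Δ' hΔ')
end

section
/- Suppose moreover that Δ_H^x = Δ_H for all x ∈ G, and let D = (Δ_G, Δ_H) ∈ G ⋉ H. Let (g,h) ∈ G ⋉ H. (i) If r₁ is the greatest integer with Δ_G^{r₁} ≤_L g in G and r₂ is the greatest integer with Δ_H^{r₂} ≤_L h in H, then min{r₁, r₂} is the greatest integer r such that D^r ≤_L (g,h) in G ⋉ H. (ii) If s₁ is the least integer with g ≤_L Δ_G^{s₁} in G and s₂ is the least integer with h ≤_L Δ_H^{s₂} in H, then max{s₁, s₂} is the least integer s such that (g,h) ≤_L D^s in G ⋉ H. -/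
/-- Group-level left divisibility: `a ≤_L b` iff `a⁻¹ * b` is positive. -/
def gdvdL {G : Type*} [Group G] (P : Submonoid G) (a b : G) : Prop := a⁻¹ * b ∈ P

/-- Group-level right divisibility: `a ≤_R b` iff `b * a⁻¹` is positive. -/
def gdvdR {G : Type*} [Group G] (P : Submonoid G) (a b : G) : Prop := b * a⁻¹ ∈ P

/-- `G` is a Garside group with positive monoid `P` and chosen Garside element `Δ`:
`P` is a Garside monoid, every element of `G` is a fraction `a * b⁻¹` of positive
elements, and `Δ` is a Garside element of `P`. -/
def IsGarsideGroup {G : Type*} [Group G] (P : Submonoid G) (Δ : G) : Prop :=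
  IsGarsideMonoid P ∧
  (∀ g : G, ∃ a b : P, g = (a : G) * (b : G)⁻¹) ∧
  ∃ hΔ : Δ ∈ P, IsGarsideElt (⟨Δ, hΔ⟩ : P)

/-- A right action of the group `G` on the group `H` by group automorphisms,
written `h ↦ ρ.act x h` (the paper's `h^x`). -/
structure RightAction (G H : Type*) [Group G] [Group H] where
  act : G → H → H
  act_mul : ∀ (x : G) (h₁ h₂ : H), act x (h₁ * h₂) = act x h₁ * act x h₂
  act_one : ∀ h : H, act 1 h = h
  act_comp : ∀ (x y : G) (h : H), act (x * y) h = act y (act x h)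

namespace RightAction

variable {G H : Type*} [Group G] [Group H]

lemma act_one' (ρ : RightAction G H) (x : G) : ρ.act x 1 = 1 := by
  have h := ρ.act_mul x 1 1
  rw [one_mul] at h
  exact left_eq_mul.mp h

end RightAction

/-- The semidirect product `G ⋉ H` with multiplication
`(x₁,h₁)·(x₂,h₂) = (x₁·x₂, h₁^{x₂}·h₂)`. -/
structure SDP {G H : Type*} [Group G] [Group H] (ρ : RightAction G H) where
  g : G
  h : H

namespace SDP

variable {G H : Type*} [Group G] [Group H] {ρ : RightAction G H}

protected def gmul (p q : SDP ρ) : SDP ρ := ⟨p.g * q.g, ρ.act q.g p.h * q.h⟩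

protected def gone : SDP ρ := ⟨1, 1⟩

protected def ginv (p : SDP ρ) : SDP ρ := ⟨p.g⁻¹, ρ.act p.g⁻¹ p.h⁻¹⟩

protected lemma gmul_assoc (p q r : SDP ρ) :
    SDP.gmul (SDP.gmul p q) r = SDP.gmul p (SDP.gmul q r) := by
  simp only [SDP.gmul, mk.injEq]
  exact ⟨mul_assoc _ _ _, by rw [ρ.act_mul, ρ.act_comp, mul_assoc]⟩

protected lemma gone_mul (p : SDP ρ) : SDP.gmul SDP.gone p = p := by
  simp only [SDP.gmul, SDP.gone]
  simp [RightAction.act_one']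

protected lemma gmul_one (p : SDP ρ) : SDP.gmul p SDP.gone = p := by
  simp only [SDP.gmul, SDP.gone]
  simp [ρ.act_one]

protected lemma ginv_mul_cancel (p : SDP ρ) : SDP.gmul (SDP.ginv p) p = SDP.gone := by
  simp only [SDP.gmul, SDP.ginv, SDP.gone, mk.injEq]
  rw [← ρ.act_comp]
  simp [ρ.act_one]

/-- The group structure on the semidirect product `G ⋉ H`. -/
instance : Group (SDP ρ) where
  mul := SDP.gmul
  one := SDP.gone
  inv := SDP.ginv
  mul_assoc := SDP.gmul_assoc
  one_mul := SDP.gone_mul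
  mul_one := SDP.gmul_one
  inv_mul_cancel := SDP.ginv_mul_cancel

@[simp] lemma mul_g (p q : SDP ρ) : (p * q).g = p.g * q.g := rfl
@[simp] lemma mul_h (p q : SDP ρ) : (p * q).h = ρ.act q.g p.h * q.h := rfl
@[simp] lemma one_g : (1 : SDP ρ).g = 1 := rfl
@[simp] lemma one_h : (1 : SDP ρ).h = 1 := rfl

end SDP

/-- Membership in the submonoid `G⁺ ⋉ H⁺` of `G ⋉ H`. -/
def SDPpos {G H : Type*} [Group G] [Group H] {ρ : RightAction G H}
    (PG : Submonoid G) (PH : Submonoid H) (p : SDP ρ) : Prop :=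
  p.g ∈ PG ∧ p.h ∈ PH

/-- `p ≤_L q` in `G ⋉ H`: `p · u = q` for some `u ∈ G⁺ ⋉ H⁺`. -/
def SDPdvdL {G H : Type*} [Group G] [Group H] {ρ : RightAction G H}
    (PG : Submonoid G) (PH : Submonoid H) (p q : SDP ρ) : Prop :=
  ∃ u : SDP ρ, SDPpos PG PH u ∧ p * u = q

/-- `p ≤_R q` in `G ⋉ H`: `u · p = q` for some `u ∈ G⁺ ⋉ H⁺`. -/
def SDPdvdR {G H : Type*} [Group G] [Group H] {ρ : RightAction G H}
    (PG : Submonoid G) (PH : Submonoid H) (p q : SDP ρ) : Prop :=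
  ∃ u : SDP ρ, SDPpos PG PH u ∧ u * p = q

/-!
As `Δ_H` is fixed by the action, `D^t = (Δ_G^t, Δ_H^t)`. In general `(a, b) ≤_L (c, d)` in
`G ⋉ H` means `a ≤_L c` and `(b⁻¹)^{a⁻¹c} · d ∈ H⁺`; when `b` or `d` is fixed by the action
(for `d` using also that the action preserves `H⁺`) the second condition is just `b ≤_L d`.
So the exponents `t` with `D^t ≤_L (g, h)` are those with both `Δ_G^t ≤_L g` and
`Δ_H^t ≤_L h`; as `Δ` is positive, each of these sets is closed downwards, and the greatest
element of the intersection is the minimum. The bound `s` is dual.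
-/

section LinearOrder

variable {α : Type*} [LinearOrder α] {s t : Set α} {a b : α}

lemma IsLowerSet.isGreatest_inter (hs : IsLowerSet s) (ht : IsLowerSet t)
    (ha : IsGreatest s a) (hb : IsGreatest t b) : IsGreatest (s ∩ t) (min a b) :=
  ⟨⟨hs (min_le_left a b) ha.1, ht (min_le_right a b) hb.1⟩,
    fun _ hx ↦ le_min (ha.2 hx.1) (hb.2 hx.2)⟩

lemma IsUpperSet.isLeast_inter (hs : IsUpperSet s) (ht : IsUpperSet t)
    (ha : IsLeast s a) (hb : IsLeast t b) : IsLeast (s ∩ t) (max a b) :=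
  ⟨⟨hs (le_max_left a b) ha.1, ht (le_max_right a b) hb.1⟩,
    fun _ hx ↦ max_le (ha.2 hx.1) (hb.2 hx.2)⟩

end LinearOrder

section gdvdL

variable {G : Type*} [Group G] {P : Submonoid G}

lemma gdvdL_trans {a b c : G} (hab : gdvdL P a b) (hbc : gdvdL P b c) : gdvdL P a c := by
  have hsplit : a⁻¹ * c = (a⁻¹ * b) * (b⁻¹ * c) := by group
  unfold gdvdL
  rw [hsplit]
  exact mul_mem hab hbc

lemma gdvdL_zpow_zpow {Δ : G} (hΔ : Δ ∈ P) {m n : ℤ} (hmn : m ≤ n) :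
    gdvdL P (Δ ^ m) (Δ ^ n) := by
  obtain ⟨k, hk⟩ := Int.eq_ofNat_of_zero_le (sub_nonneg.mpr hmn)
  unfold gdvdL
  rw [← zpow_neg, ← zpow_add, neg_add_eq_sub, hk, zpow_natCast]
  exact pow_mem hΔ k

lemma isLowerSet_setOf_zpow_gdvdL {Δ : G} (hΔ : Δ ∈ P) (g : G) :
    IsLowerSet {t : ℤ | gdvdL P (Δ ^ t) g} :=
  fun _ _ hts ht ↦ gdvdL_trans (gdvdL_zpow_zpow hΔ hts) ht

lemma isUpperSet_setOf_gdvdL_zpow {Δ : G} (hΔ : Δ ∈ P) (g : G) :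
    IsUpperSet {t : ℤ | gdvdL P g (Δ ^ t)} :=
  fun _ _ hst hs ↦ gdvdL_trans hs (gdvdL_zpow_zpow hΔ hst)

end gdvdL

namespace RightAction

variable {G H : Type*} [Group G] [Group H] (ρ : RightAction G H)

def toMulEquiv (x : G) : H ≃* H where
  toFun := ρ.act x
  invFun := ρ.act x⁻¹
  left_inv h := by rw [← ρ.act_comp, mul_inv_cancel, ρ.act_one]
  right_inv h := by rw [← ρ.act_comp, inv_mul_cancel, ρ.act_one]
  map_mul' := ρ.act_mul x

@[simp] lemma toMulEquiv_apply (x : G) (h : H) : ρ.toMulEquiv x h = ρ.act x h := rfl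

lemma act_inv (x : G) (h : H) : ρ.act x h⁻¹ = (ρ.act x h)⁻¹ :=
  map_inv (ρ.toMulEquiv x) h

lemma act_zpow_of_act_eq {x : G} {h : H} (hx : ρ.act x h = h) (t : ℤ) :
    ρ.act x (h ^ t) = h ^ t := by
  simpa [hx] using map_zpow (ρ.toMulEquiv x) h t

lemma act_mem_iff {P : Submonoid H} {x : G} (hx : ρ.act x '' (P : Set H) = P) (h : H) :
    ρ.act x h ∈ P ↔ h ∈ P := by
  rw [← SetLike.mem_coe, ← hx]
  exact (ρ.toMulEquiv x).injective.mem_set_image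

end RightAction

namespace SDP

variable {G H : Type*} [Group G] [Group H] {ρ : RightAction G H}

variable (ρ) in
def inl : G →* SDP ρ where
  toFun a := ⟨a, 1⟩
  map_one' := by rfl
  map_mul' a b := by
    show (⟨a * b, 1⟩ : SDP ρ) = ⟨a * b, ρ.act b 1 * 1⟩
    rw [RightAction.act_one', mul_one]

variable (ρ) in
def inr : H →* SDP ρ where
  toFun b := ⟨1, b⟩
  map_one' := by rfl
  map_mul' a b := by
    show (⟨1, a * b⟩ : SDP ρ) = ⟨1 * 1, ρ.act 1 a * b⟩
    rw [ρ.act_one, mul_one]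

lemma inl_mul_inr (a : G) (b : H) : inl ρ a * inr ρ b = ⟨a, b⟩ := by
  show (⟨a * 1, ρ.act 1 1 * b⟩ : SDP ρ) = ⟨a, b⟩
  rw [mul_one, ρ.act_one, one_mul]

lemma inr_mul_inl (a : G) (b : H) : inr ρ b * inl ρ a = ⟨a, ρ.act a b⟩ := by
  show (⟨1 * a, ρ.act a b * 1⟩ : SDP ρ) = ⟨a, ρ.act a b⟩
  rw [one_mul, mul_one]

lemma mk_zpow_of_act_eq {a : G} {b : H} (hb : ρ.act a b = b) (t : ℤ) :
    (⟨a, b⟩ : SDP ρ) ^ t = ⟨a ^ t, b ^ t⟩ := by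
  have hcomm : Commute (inl ρ a) (inr ρ b) := by
    rw [Commute, SemiconjBy, inl_mul_inr, inr_mul_inl, hb]
  rw [← inl_mul_inr, hcomm.mul_zpow, ← map_zpow, ← map_zpow, inl_mul_inr]

lemma sdpdvdL_iff_sdppos_inv_mul (PG : Submonoid G) (PH : Submonoid H) (p q : SDP ρ) :
    SDPdvdL PG PH p q ↔ SDPpos PG PH (p⁻¹ * q) :=
  ⟨fun ⟨u, hu, hpu⟩ ↦ by rwa [← hpu, inv_mul_cancel_left],
    fun hpq ↦ ⟨p⁻¹ * q, hpq, mul_inv_cancel_left p q⟩⟩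

variable {PG : Submonoid G} {PH : Submonoid H} {a c : G} {b d : H}

lemma sdpdvdL_mk_iff :
    SDPdvdL PG PH (⟨a, b⟩ : SDP ρ) ⟨c, d⟩ ↔
      gdvdL PG a c ∧ ρ.act (a⁻¹ * c) b⁻¹ * d ∈ PH := by
  rw [sdpdvdL_iff_sdppos_inv_mul, ρ.act_comp]
  rfl

lemma sdpdvdL_mk_iff_of_act_left (hb : ρ.act (a⁻¹ * c) b = b) :
    SDPdvdL PG PH (⟨a, b⟩ : SDP ρ) ⟨c, d⟩ ↔ gdvdL PG a c ∧ gdvdL PH b d := by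
  rw [sdpdvdL_mk_iff, ρ.act_inv, hb]
  rfl

lemma sdpdvdL_mk_iff_of_act_right (hx : ρ.act (a⁻¹ * c) '' (PH : Set H) = PH)
    (hd : ρ.act (a⁻¹ * c) d = d) :
    SDPdvdL PG PH (⟨a, b⟩ : SDP ρ) ⟨c, d⟩ ↔ gdvdL PG a c ∧ gdvdL PH b d := by
  have hmove : ρ.act (a⁻¹ * c) b⁻¹ * d = ρ.act (a⁻¹ * c) (b⁻¹ * d) := by
    rw [ρ.act_mul, hd]
  rw [sdpdvdL_mk_iff, hmove, ρ.act_mem_iff hx]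
  rfl

end SDP

/-- **Lemma 4.4 (4),(5).** Suppose `Δ_H` is fixed under the action of `G` and let
`D = (Δ_G, Δ_H)`. For `(g,h) ∈ G ⋉ H`,
`inf((g,h)) = min{inf(g), inf(h)}` and `sup((g,h)) = max{sup(g), sup(h)}`. -/
theorem sdp_inf_sup {G H : Type*} [Group G] [Group H] (ρ : RightAction G H)
    (PG : Submonoid G) (PH : Submonoid H) (ΔG : G) (ΔH : H)
    (hG : IsGarsideGroup PG ΔG) (hH : IsGarsideGroup PH ΔH)
    (hact : ∀ x : G, ρ.act x '' (PH : Set H) = (PH : Set H))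
    (hfix : ∀ x : G, ρ.act x ΔH = ΔH)
    (g : G) (h : H) (r₁ r₂ s₁ s₂ : ℤ)
    (hr₁ : IsGreatest {t : ℤ | gdvdL PG (ΔG ^ t) g} r₁)
    (hr₂ : IsGreatest {t : ℤ | gdvdL PH (ΔH ^ t) h} r₂)
    (hs₁ : IsLeast {t : ℤ | gdvdL PG g (ΔG ^ t)} s₁)
    (hs₂ : IsLeast {t : ℤ | gdvdL PH h (ΔH ^ t)} s₂) :
    IsGreatest {t : ℤ | SDPdvdL PG PH ((SDP.mk ΔG ΔH : SDP ρ) ^ t) (SDP.mk g h)}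
      (min r₁ r₂) ∧
    IsLeast {t : ℤ | SDPdvdL PG PH (SDP.mk g h : SDP ρ) ((SDP.mk ΔG ΔH : SDP ρ) ^ t)}
      (max s₁ s₂) := by
  obtain ⟨hΔG, -⟩ := hG.2.2
  obtain ⟨hΔH, -⟩ := hH.2.2
  have hfix_zpow (x : G) (t : ℤ) : ρ.act x (ΔH ^ t) = ΔH ^ t :=
    ρ.act_zpow_of_act_eq (hfix x) t
  have hinf : {t : ℤ | SDPdvdL PG PH ((SDP.mk ΔG ΔH : SDP ρ) ^ t) (SDP.mk g h)} =
      {t | gdvdL PG (ΔG ^ t) g} ∩ {t | gdvdL PH (ΔH ^ t) h} := by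
    ext t
    rw [Set.mem_ofPred_eq, SDP.mk_zpow_of_act_eq (hfix ΔG),
      SDP.sdpdvdL_mk_iff_of_act_left (hfix_zpow _ t)]
    rfl
  have hsup : {t : ℤ | SDPdvdL PG PH (SDP.mk g h : SDP ρ) ((SDP.mk ΔG ΔH : SDP ρ) ^ t)} =
      {t | gdvdL PG g (ΔG ^ t)} ∩ {t | gdvdL PH h (ΔH ^ t)} := by
    ext t
    rw [Set.mem_ofPred_eq, SDP.mk_zpow_of_act_eq (hfix ΔG),
      SDP.sdpdvdL_mk_iff_of_act_right (hact _) (hfix_zpow _ t)]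
    rfl
  rw [hinf, hsup]
  exact ⟨(isLowerSet_setOf_zpow_gdvdL hΔG g).isGreatest_inter
      (isLowerSet_setOf_zpow_gdvdL hΔH h) hr₁ hr₂,
    (isUpperSet_setOf_gdvdL_zpow hΔG g).isLeast_inter
      (isUpperSet_setOf_gdvdL_zpow hΔH h) hs₁ hs₂⟩
end
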